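/- Let h(u) = (1/(2π))·(√(1 − u²) + (π − arccos u)·u) on [−1, 1]. Then (i) h'(u) = (π − arccos u)/(2π) > 0 for all u ∈ (−1, 1), and (ii) u·h''(u) < h'(u) for all u ∈ (−1, 1/√2], where h''(u) = 1/(2π√(1 − u²)). -/

import Mathlib

open Real

noncomputable def hrelu (u : ℝ) : ℝ :=
  (1 / (2 * π)) * (Real.sqrt (1 - u ^ 2) + (π - Real.arccos u) * u)

/-!
Differentiating `h`, the terms `∓u/√(1−u²)` coming from `√(1−u²)` and from `arccos u` cancel,
so `h' = (π − arccos u)/(2π)` and `h'' = 1/(2π√(1−u²))`. Then `u h'' < h'` is clear for `u ≤ 0`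
because `h' > 0`, while for `0 < u ≤ 1/√2` we have `u ≤ √(1−u²)`, hence
`2π u h'' ≤ 1 < π/2 < π − arccos u`.
-/

namespace Hrelu

lemma sqrt_one_sub_sq_pos {u : ℝ} (hu : u ∈ Set.Ioo (-1 : ℝ) 1) : 0 < √(1 - u ^ 2) :=
  Real.sqrt_pos.mpr (by nlinarith [hu.1, hu.2])

lemma Ioc_subset_Ioo : Set.Ioc (-1 : ℝ) (1 / √2) ⊆ Set.Ioo (-1) 1 := by
  have h : 1 / √2 < 1 := by
    rw [div_lt_one (by positivity), Real.lt_sqrt zero_le_one]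
    norm_num
  exact fun u hu => ⟨hu.1, hu.2.trans_lt h⟩

lemma le_sqrt_one_sub_sq {u : ℝ} (hu : u ≤ 1 / √2) : u ≤ √(1 - u ^ 2) := by
  rcases le_or_gt u 0 with hneg | hpos
  · exact hneg.trans (Real.sqrt_nonneg _)
  · have h2u : u * √2 ≤ 1 := (le_div_iff₀ (by positivity)).mp hu
    have h2u2 : (u * √2) ^ 2 ≤ 1 := pow_le_one₀ (by positivity) h2u
    rw [mul_pow, Real.sq_sqrt zero_le_two] at h2u2
    rw [Real.le_sqrt' hpos]
    linarith

lemma div_sqrt_one_sub_sq_lt_pi_sub_arccos {u : ℝ} (hu : u ∈ Set.Ioc (-1 : ℝ) (1 / √2)) :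
    u / √(1 - u ^ 2) < π - Real.arccos u := by
  have hs := sqrt_one_sub_sq_pos (Ioc_subset_Ioo hu)
  rcases le_or_gt u 0 with hneg | hpos
  · have : u / √(1 - u ^ 2) ≤ 0 := div_nonpos_of_nonpos_of_nonneg hneg hs.le
    linarith [Real.arccos_lt_pi.mpr hu.1]
  · calc u / √(1 - u ^ 2) ≤ 1 := (div_le_one hs).mpr (le_sqrt_one_sub_sq hu.2)
      _ < π / 2 := by linarith [Real.pi_gt_three]
      _ < π - Real.arccos u := by linarith [Real.arccos_lt_pi_div_two.mpr hpos]

lemma hasDerivAt_hrelu {u : ℝ} (hu : u ∈ Set.Ioo (-1 : ℝ) 1) :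
    HasDerivAt hrelu ((π - Real.arccos u) / (2 * π)) u := by
  have hs := sqrt_one_sub_sq_pos hu
  have hsqrt : HasDerivAt (fun u : ℝ => √(1 - u ^ 2)) (-u / √(1 - u ^ 2)) u := by
    convert ((hasDerivAt_pow 2 u).const_sub 1).sqrt (sqrt_pos.mp hs).ne' using 1
    field_simp
    ring
  have harccos := ((Real.hasDerivAt_arccos (x := u) hu.1.ne' hu.2.ne).const_sub π).mul
    (hasDerivAt_id' u)
  refine ((hsqrt.add harccos).const_mul (1 / (2 * π))).congr_deriv ?_
  field_simp
  ring

lemma deriv_hrelu_eqOn :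
    Set.EqOn (deriv hrelu) (fun u => (π - Real.arccos u) / (2 * π)) (Set.Ioo (-1) 1) :=
  fun _ hu => (hasDerivAt_hrelu hu).deriv

lemma hasDerivAt_deriv_hrelu {u : ℝ} (hu : u ∈ Set.Ioo (-1 : ℝ) 1) :
    HasDerivAt (deriv hrelu) (1 / (2 * π * √(1 - u ^ 2))) u := by
  have hs := sqrt_one_sub_sq_pos hu
  have h := ((Real.hasDerivAt_arccos (x := u) hu.1.ne' hu.2.ne).const_sub π).div_const (2 * π)
  refine (h.congr_of_eventuallyEq (deriv_hrelu_eqOn.eventuallyEq_of_mem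
    (isOpen_Ioo.mem_nhds hu))).congr_deriv ?_
  field_simp

end Hrelu

open Hrelu in
/-- (i) `h'(u) = (π − arccos u)/(2π) > 0` on `(−1, 1)`;
(ii) `u·h''(u) < h'(u)` on `(−1, 1/√2]`, where `h''(u) = 1/(2π√(1−u²))`. -/
theorem hrelu_derivative_properties :
    (∀ u ∈ Set.Ioo (-1 : ℝ) 1,
      deriv hrelu u = (π - Real.arccos u) / (2 * π) ∧ 0 < deriv hrelu u) ∧
    (∀ u ∈ Set.Ioc (-1 : ℝ) (1 / Real.sqrt 2),
      deriv (deriv hrelu) u = 1 / (2 * π * Real.sqrt (1 - u ^ 2)) ∧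
      u * deriv (deriv hrelu) u < deriv hrelu u) := by
  refine ⟨fun u hu => ⟨deriv_hrelu_eqOn hu, ?_⟩, fun u hu => ?_⟩
  · rw [deriv_hrelu_eqOn hu]
    exact div_pos (sub_pos.mpr (Real.arccos_lt_pi.mpr hu.1)) (by positivity)
  · have hu' := Ioc_subset_Ioo hu
    have hd2 := (hasDerivAt_deriv_hrelu hu').deriv
    refine ⟨hd2, ?_⟩
    rw [hd2, deriv_hrelu_eqOn hu']
    calc u * (1 / (2 * π * √(1 - u ^ 2))) = u / √(1 - u ^ 2) / (2 * π) := by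
          field_simp
      _ < (π - Real.arccos u) / (2 * π) := by
          gcongr
          exact div_sqrt_one_sub_sq_lt_pi_sub_arccos hu
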